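/- Let R be an infinite integral domain, n ≥ 2, and p(x₁,...,xₙ) = c₀ + Σ c_i x_i an associative affine polynomial function. Then c₁² = c₁ and cₙ² = cₙ. -/

import Mathlib

/-!
Feed the bracketings at the first and second slot the input `t • e₁`. Only the first
variable is nonzero, so the first bracketing evaluates to `c₀ + c₁ (c₀ + c₁ t)` and the
second to `c₀ + c₁ t + c₂ c₀`; comparing them at `t = 0` and `t = 1` gives `c₁² = c₁`.
Symmetrically, the input `t • e_{2n-1}` fed to the bracketings at the first and last slot
gives `cₙ² = cₙ`.
-/

/-- Substituting `f` applied to the window `x_i, ..., x_{i+n-1}` into slot `i`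
of `f` applied to the remaining outer variables among `x_1, ..., x_{2n-1}`. -/
def nestAt {R : Type*} (n : ℕ) (f : (Fin n → R) → R) (i : Fin n)
    (x : Fin (2 * n - 1) → R) : R :=
  f (fun j =>
    if (j : ℕ) < (i : ℕ) then x ⟨j, by have := j.isLt; have := i.isLt; omega⟩
    else if (j : ℕ) = (i : ℕ) then
      f (fun k => x ⟨(i : ℕ) + (k : ℕ), by have := k.isLt; have := i.isLt; omega⟩)
    else x ⟨(j : ℕ) + n - 1, by have := j.isLt; have := i.isLt; omega⟩)

/-- `f` is `n`-ary associative: all the bracketings coincide. -/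
def IsNAssoc {R : Type*} (n : ℕ) (f : (Fin n → R) → R) : Prop :=
  ∀ i j : Fin n, ∀ x : Fin (2 * n - 1) → R, nestAt n f i x = nestAt n f j x

section NAryOperation

variable {R : Type*} {n : ℕ}

theorem nestAt_zero_single_zero [Zero R] (f : (Fin n → R) → R) (hn : 0 < n) (t : R) :
    nestAt n f ⟨0, hn⟩ (Pi.single ⟨0, by omega⟩ t) =
      f (Pi.single ⟨0, hn⟩ (f (Pi.single ⟨0, hn⟩ t))) := by
  unfold nestAt
  congr 1
  ext j
  simp only [Pi.single_apply, Fin.ext_iff]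
  split_ifs <;> first | omega | rfl | (congr 1; ext k; grind)

theorem nestAt_single_zero_of_ne [AddZeroClass R] (f : (Fin n → R) → R) (hn : 0 < n) {i : Fin n}
    (hi : (i : ℕ) ≠ 0) (t : R) :
    nestAt n f i (Pi.single ⟨0, by omega⟩ t) =
      f ((Pi.single ⟨0, hn⟩ t : Fin n → R) + Pi.single i (f 0)) := by
  unfold nestAt
  congr 1
  ext j
  simp only [Pi.add_apply, Pi.single_apply, Fin.ext_iff, add_ite, ite_add, add_zero, zero_add]
  split_ifs <;> first | omega | rfl | (congr 1; ext k; rw [Pi.zero_apply, if_neg (by omega)])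

theorem nestAt_last_single_last [Zero R] (f : (Fin n → R) → R) (hn : 0 < n) (t : R) :
    nestAt n f ⟨n - 1, by omega⟩ (Pi.single ⟨2 * n - 2, by omega⟩ t) =
      f (Pi.single ⟨n - 1, by omega⟩ (f (Pi.single ⟨n - 1, by omega⟩ t))) := by
  unfold nestAt
  congr 1
  ext j
  simp only [Pi.single_apply, Fin.ext_iff]
  split_ifs <;> first | omega | rfl | (congr 1; ext k; grind)

theorem nestAt_single_last_of_ne [AddZeroClass R] (f : (Fin n → R) → R) (hn : 0 < n) {i : Fin n}
    (hi : (i : ℕ) ≠ n - 1) (t : R) :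
    nestAt n f i (Pi.single ⟨2 * n - 2, by omega⟩ t) =
      f ((Pi.single ⟨n - 1, by omega⟩ t : Fin n → R) + Pi.single i (f 0)) := by
  unfold nestAt
  congr 1
  ext j
  simp only [Pi.add_apply, Pi.single_apply, Fin.ext_iff, add_ite, ite_add, add_zero, zero_add]
  split_ifs <;> first | omega | rfl | (congr 1; ext k; rw [Pi.zero_apply, if_neg (by omega)])

end NAryOperation

section AffineForm

variable {ι R : Type*} [Fintype ι] [DecidableEq ι] [NonUnitalNonAssocSemiring R]

theorem sum_mul_single (c : ι → R) (a : ι) (s : R) :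
    ∑ i, c i * (Pi.single a s : ι → R) i = c a * s :=
  dotProduct_single c s a

theorem sum_mul_single_add_single (c : ι → R) (a b : ι) (s t : R) :
    ∑ i, c i * (Pi.single a s + Pi.single b t : ι → R) i = c a * s + c b * t := by
  rw [← dotProduct, dotProduct_add, dotProduct_single, dotProduct_single]

end AffineForm

theorem stmt_11 {R : Type*} [CommRing R]
    (n : ℕ) (hn : 2 ≤ n) (c₀ : R) (c : Fin n → R)
    (hassoc : IsNAssoc n (fun x : Fin n → R => c₀ + ∑ i, c i * x i)) :
    c ⟨0, by omega⟩ ^ 2 = c ⟨0, by omega⟩ ∧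
      c ⟨n - 1, by omega⟩ ^ 2 = c ⟨n - 1, by omega⟩ := by
  have hn0 : 0 < n := by omega
  set a := c ⟨0, hn0⟩
  set b := c ⟨n - 1, by omega⟩
  have first (t : R) : c₀ + a * (c₀ + a * t) = c₀ + (a * t + c ⟨1, hn⟩ * c₀) := by
    have h := hassoc ⟨0, hn0⟩ ⟨1, hn⟩ (Pi.single ⟨0, by omega⟩ t)
    rw [nestAt_zero_single_zero _ hn0, nestAt_single_zero_of_ne _ hn0 one_ne_zero] at h
    simpa only [sum_mul_single, sum_mul_single_add_single, Pi.zero_apply, mul_zero,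
      Finset.sum_const_zero, add_zero] using h
  have last (t : R) : c₀ + (b * t + a * c₀) = c₀ + b * (c₀ + b * t) := by
    have h := hassoc ⟨0, hn0⟩ ⟨n - 1, by omega⟩ (Pi.single ⟨2 * n - 2, by omega⟩ t)
    rw [nestAt_last_single_last _ hn0,
      nestAt_single_last_of_ne _ hn0 (show 0 ≠ n - 1 by omega)] at h
    simpa only [sum_mul_single, sum_mul_single_add_single, Pi.zero_apply, mul_zero,
      Finset.sum_const_zero, add_zero] using h
  exact ⟨by linear_combination first 1 - first 0, by linear_combination last 0 - last 1⟩
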